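/- arXiv:cs/0409043 — 6 statements merged into one kernel-verified Lean document; each statement's English description precedes it below -/
import Mathlib

section
/- Let φ be an E3SAT instance with m clauses (each clause having exactly 3 literals with distinct variables), and let G_φ be the graph with one vertex for each literal occurrence, with clause edges forming a triangle among the three occurrences in each clause, and consistency edges between occurrences of a variable with opposite polarity in different clauses. Then G_φ has an independent set of size ≥ t if and only if there is a Boolean assignment satisfying at least t clauses of φ. -/
/-- FGLSS-style reduction from E3SAT to Independent Set: the graph `G_φ` built from an
E3SAT instance `φ` with `m` clauses (a vertex for each literal occurrence, triangle edges
within clauses, consistency edges between opposite-polarity occurrences of a variable in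
different clauses) has an independent set of size `≥ t` iff some Boolean assignment
satisfies at least `t` clauses of `φ`. -/
theorem fglss_independent_set_iff_assignment (m t : ℕ)
    (φ : Fin m → Fin 3 → ℕ × Bool)
    (hdistinct : ∀ j : Fin m, Function.Injective fun a : Fin 3 => (φ j a).1) :
    (∃ S : Finset (Fin m × Fin 3),
      (∀ v ∈ S, ∀ w ∈ S,
        ¬ ((v.1 = w.1 ∧ v.2 ≠ w.2) ∨
           (v.1 ≠ w.1 ∧ (φ v.1 v.2).1 = (φ w.1 w.2).1 ∧ (φ v.1 v.2).2 ≠ (φ w.1 w.2).2))) ∧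
      t ≤ S.card) ↔
    (∃ σ : ℕ → Bool,
      t ≤ (Finset.univ.filter
        (fun j : Fin m => ∃ a : Fin 3, σ (φ j a).1 = (φ j a).2)).card) := by
  classical
  constructor
  · rintro ⟨S, hind, hcard⟩
    refine ⟨fun n =>
      if h : ∃ v, v ∈ S ∧ (φ v.1 v.2).1 = n then (φ h.choose.1 h.choose.2).2 else true, ?_⟩
    set σ : ℕ → Bool := fun n =>
      if h : ∃ v, v ∈ S ∧ (φ v.1 v.2).1 = n then (φ h.choose.1 h.choose.2).2 else true with hσ
    have key : ∀ v ∈ S, σ (φ v.1 v.2).1 = (φ v.1 v.2).2 := by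
      intro v hv
      have h : ∃ w, w ∈ S ∧ (φ w.1 w.2).1 = (φ v.1 v.2).1 := ⟨v, hv, rfl⟩
      simp only [hσ, dif_pos h]
      obtain ⟨hw, hvar⟩ := h.choose_spec
      set w := h.choose with hwdef
      by_cases hc : w.1 = v.1
      · rw [hc] at hvar
        have h3 : w.2 = v.2 := hdistinct v.1 hvar
        rw [hc, h3]
      · by_contra hne
        exact hind w hw v hv (Or.inr ⟨hc, hvar, hne⟩)
    have hinj : Set.InjOn Prod.fst (S : Set (Fin m × Fin 3)) := by
      intro v hv w hw h
      by_cases h2 : v.2 = w.2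
      · exact Prod.ext h h2
      · exact absurd (Or.inl ⟨h, h2⟩) (hind v hv w hw)
    have hsub : S.image Prod.fst ⊆ Finset.univ.filter
        (fun j : Fin m => ∃ a : Fin 3, σ (φ j a).1 = (φ j a).2) := by
      intro j hj
      simp only [Finset.mem_image] at hj
      obtain ⟨v, hv, rfl⟩ := hj
      simp only [Finset.mem_filter, Finset.mem_univ, true_and]
      exact ⟨v.2, key v hv⟩
    calc t ≤ S.card := hcard
      _ = (S.image Prod.fst).card := (Finset.card_image_of_injOn hinj).symm
      _ ≤ _ := Finset.card_le_card hsub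
  · rintro ⟨σ, hσ⟩
    set T := Finset.univ.filter
        (fun j : Fin m => ∃ a : Fin 3, σ (φ j a).1 = (φ j a).2) with hT
    set f : Fin m → Fin 3 := fun j =>
      if h : ∃ a : Fin 3, σ (φ j a).1 = (φ j a).2 then h.choose else 0 with hf
    have hfspec : ∀ j ∈ T, σ (φ j (f j)).1 = (φ j (f j)).2 := by
      intro j hj
      simp only [hT, Finset.mem_filter, Finset.mem_univ, true_and] at hj
      simp only [hf, dif_pos hj]
      exact hj.choose_spec
    refine ⟨T.image (fun j => (j, f j)), ?_, ?_⟩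
    · intro v hv w hw
      simp only [Finset.mem_image] at hv hw
      obtain ⟨j, hj, rfl⟩ := hv
      obtain ⟨k, hk, rfl⟩ := hw
      rintro (⟨h1, h2⟩ | ⟨h1, h2, h3⟩)
      · exact h2 (by simp_all)
      · have := hfspec j hj
        have hk' := hfspec k hk
        rw [h2] at this
        exact h3 (this.symm.trans hk')
    · calc t ≤ T.card := hσ
        _ = (T.image (fun j => (j, f j))).card := by
            rw [Finset.card_image_of_injective _ (fun a b h => ((Prod.mk.injEq _ _ _ _).mp h).1)]
end

section
/- In the graph G_φ built from an E3SAT instance φ with m clauses (triangles for clauses and consistency edges for opposite-polarity occurrences), every independent set has size at most m, and an independent set of size exactly m exists if and only if φ is satisfiable. -/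
/-- In the FGLSS-style graph `G_φ` of an E3SAT instance with `m` clauses, every
independent set has size at most `m`, and an independent set of size exactly `m`
exists iff `φ` is satisfiable. -/
theorem fglss_independent_set_le_and_eq_iff_satisfiable (m : ℕ)
    (φ : Fin m → Fin 3 → ℕ × Bool)
    (hdistinct : ∀ j : Fin m, Function.Injective fun a : Fin 3 => (φ j a).1) :
    (∀ S : Finset (Fin m × Fin 3),
      (∀ v ∈ S, ∀ w ∈ S,
        ¬ ((v.1 = w.1 ∧ v.2 ≠ w.2) ∨
           (v.1 ≠ w.1 ∧ (φ v.1 v.2).1 = (φ w.1 w.2).1 ∧ (φ v.1 v.2).2 ≠ (φ w.1 w.2).2))) →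
      S.card ≤ m) ∧
    ((∃ S : Finset (Fin m × Fin 3),
      (∀ v ∈ S, ∀ w ∈ S,
        ¬ ((v.1 = w.1 ∧ v.2 ≠ w.2) ∨
           (v.1 ≠ w.1 ∧ (φ v.1 v.2).1 = (φ w.1 w.2).1 ∧ (φ v.1 v.2).2 ≠ (φ w.1 w.2).2))) ∧
      S.card = m) ↔
     (∃ σ : ℕ → Bool, ∀ j : Fin m, ∃ a : Fin 3, σ (φ j a).1 = (φ j a).2)) := by
  classical
  constructor
  · intro S hS
    have h1 : S.card ≤ (Finset.univ : Finset (Fin m)).card := by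
      apply Finset.card_le_card_of_injOn Prod.fst (fun _ _ => Finset.mem_univ _)
      intro v hv w hw h
      by_contra hne
      exact hS v hv w hw (Or.inl ⟨h, fun h2 => hne (Prod.ext h h2)⟩)
    simpa using h1
  constructor
  · rintro ⟨S, hS, hcard⟩
    have hinj : Set.InjOn Prod.fst (S : Set (Fin m × Fin 3)) := by
      intro v hv w hw h
      by_contra hne
      exact hS v hv w hw (Or.inl ⟨h, fun h2 => hne (Prod.ext h h2)⟩)
    have hsurj : ∀ j : Fin m, ∃ v ∈ S, v.1 = j := by
      have himg : S.image Prod.fst = Finset.univ := by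
        apply Finset.eq_univ_of_card
        rw [Finset.card_image_of_injOn hinj, hcard]; simp
      intro j
      have : j ∈ S.image Prod.fst := by rw [himg]; exact Finset.mem_univ j
      simpa [Finset.mem_image] using this
    refine ⟨fun n => if h : ∃ v ∈ S, (φ v.1 v.2).1 = n then
      (φ h.choose.1 h.choose.2).2 else true, ?_⟩
    intro j
    obtain ⟨v, hv, hvj⟩ := hsurj j
    subst hvj
    refine ⟨v.2, ?_⟩
    have hex : ∃ w ∈ S, (φ w.1 w.2).1 = (φ v.1 v.2).1 := ⟨v, hv, rfl⟩
    show (if h : ∃ w ∈ S, (φ w.1 w.2).1 = (φ v.1 v.2).1 then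
      (φ h.choose.1 h.choose.2).2 else true) = (φ v.1 v.2).2
    rw [dif_pos hex]
    obtain ⟨hwS, hwvar⟩ := hex.choose_spec
    set w := hex.choose with hw
    by_cases hw1 : w.1 = v.1
    · have hw2 : w.2 = v.2 := by
        by_contra h2
        exact hS w hwS v hv (Or.inl ⟨hw1, h2⟩)
      have : w = v := Prod.ext hw1 hw2
      rw [this]
    · by_contra hne
      exact hS w hwS v hv (Or.inr ⟨hw1, hwvar, hne⟩)
  · rintro ⟨σ, hσ⟩
    choose a ha using hσ
    refine ⟨Finset.image (fun j => (j, a j)) Finset.univ, ?_, ?_⟩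
    · intro v hv w hw hedge
      simp only [Finset.mem_image, Finset.mem_univ, true_and] at hv hw
      obtain ⟨j, hj⟩ := hv
      obtain ⟨k, hk⟩ := hw
      subst hj; subst hk
      rcases hedge with ⟨h1, h2⟩ | ⟨h1, h2, h3⟩
      · simp only at h1 h2
        subst h1
        exact h2 rfl
      · simp only at h1 h2 h3
        apply h3
        rw [← ha j, ← ha k, h2]
    · rw [Finset.card_image_of_injective _ (fun x y h => (Prod.mk.injEq _ _ _ _ ▸ h : _ ∧ _).1)]
      simp
end

section
/- Let φ be a 3CNF formula with n variables and m clauses, where variable x_i has occ_i occurrences, and let ψ be the bounded-occurrence formula obtained by introducing variables y_{i,j} for each occurrence, replacing each clause of φ by a primary clause on the corresponding y-variables, and adding for each edge ([i,j],[i,j']) of a 1-expander graph on the occurrences of x_i the two consistency clauses (y_{i,j} ∨ ¬y_{i,j'}) and (¬y_{i,j} ∨ y_{i,j'}). If there is an assignment for φ satisfying m − k clauses, then there is an assignment for ψ satisfying at least M − k clauses, where M is the total number of clauses of ψ. -/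
/-- Expander-based reduction to bounded occurrences, easy direction.
`φ` is a 3CNF with `m` clauses (clause `j` has literals `φ j a`, a variable paired with
a polarity). The occurrences of each variable carry a 1-expander structure given by the
edge list `Edges` (each edge joins two occurrences of the same variable). The formula `ψ`
has one variable `y_{j,a}` per occurrence (an assignment is `b : Fin m × Fin 3 → Bool`),
one primary clause per clause of `φ`, and two consistency clauses per expander edge, so
`M = m + 2·|Edges|` clauses in total (an edge contributes 2 satisfied clauses when its
endpoints agree and 1 when they disagree).
If some assignment `σ` for `φ` satisfies `m − k` clauses, then some assignment `b` for `ψ`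
satisfies at least `M − k` clauses. -/
theorem expander_reduction_completeness (m k : ℕ)
    (φ : Fin m → Fin 3 → ℕ × Bool)
    (Edges : List ((Fin m × Fin 3) × (Fin m × Fin 3)))
    (hEdgeVar : ∀ e ∈ Edges, (φ e.1.1 e.1.2).1 = (φ e.2.1 e.2.2).1)
    (hExpander : ∀ (i : ℕ) (S : Finset (Fin m × Fin 3)),
      (∀ p ∈ S, (φ p.1 p.2).1 = i) →
      2 * S.card ≤ (Finset.univ.filter
        (fun p : Fin m × Fin 3 => (φ p.1 p.2).1 = i)).card →
      S.card ≤ Edges.countP (fun e =>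
        decide ((e.1 ∈ S ∧ e.2 ∉ S) ∨ (e.1 ∉ S ∧ e.2 ∈ S))))
    (σ : ℕ → Bool) (hk : k ≤ m)
    (hσ : (Finset.univ.filter
        (fun j : Fin m => ∃ a : Fin 3, σ (φ j a).1 = (φ j a).2)).card = m - k) :
    ∃ b : Fin m × Fin 3 → Bool,
      (m + 2 * Edges.length) - k ≤
        (Finset.univ.filter
          (fun j : Fin m => ∃ a : Fin 3, b (j, a) = (φ j a).2)).card
        + 2 * Edges.countP (fun e => b e.1 == b e.2)
        + Edges.countP (fun e => b e.1 != b e.2) := by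
  refine ⟨fun p => σ (φ p.1 p.2).1, ?_⟩
  have h1 : Edges.countP (fun e => σ (φ e.1.1 e.1.2).1 == σ (φ e.2.1 e.2.2).1)
      = Edges.length := by
    apply List.countP_eq_length.2
    intro e he
    simp [hEdgeVar e he]
  simp only at h1 ⊢
  rw [h1, hσ]
  omega
end

section
/- Let ψ be constructed from a 3CNF formula φ as follows: for each variable x_i with occurrences indexed by the clauses containing it, fix a 1-expander graph G_i on those occurrences; ψ has variables y_{i,j}, one primary clause per clause of φ (with each literal on x_i in C_j replaced by the corresponding literal on y_{i,j}), and consistency clauses (y_{i,j} ∨ ¬y_{i,j'}) and (¬y_{i,j} ∨ y_{i,j'}) for each expander edge. If some assignment for ψ leaves at most k clauses of ψ unsatisfied, then there is an assignment for φ leaving at most k clauses of φ unsatisfied; in particular, setting each x_i to the majority value of {a_{i,j} : x_i ∈ C_j} of a given ψ-assignment a contradicts at most k clauses of φ. -/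
/-!
Let `D` be the set of occurrences at which `b` disagrees with a rounding `σ`. A clause falsified
by `σ` is either falsified by `b` as well or contains an occurrence in `D`, so `σ` falsifies at
most `#(clauses falsified by b) + #D` clauses. If `σ` is a majority rounding, the part of `D` on
each variable `i` contains at most half of the occurrences of `i`, so the expansion of `G_i` gives
it at least `#(D ∩ occurrences of i)` boundary edges; an edge of `G_i` leaves `D` exactly when
`b` disagrees on its endpoints. Summing over `i`, `#D` is at most the number of inconsistent
edges, hence `σ` falsifies at most `k` clauses. A majority rounding always exists.
-/

open Finset

theorem List.sum_countP_fiber_le {α β : Type*} [DecidableEq β] (l : List α) (f : α → β)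
    (q : α → Bool) (I : Finset β) :
    ∑ i ∈ I, l.countP (fun a => f a = i ∧ q a) ≤ l.countP q := by
  induction l with
  | nil => simp
  | cons a l ih =>
    simp only [List.countP_cons, sum_add_distrib]
    have : ∑ i ∈ I, (if decide (f a = i ∧ q a) then 1 else 0) ≤ if q a then 1 else 0 := by
      cases q a <;> simp [sum_ite_eq]
      split_ifs <;> simp
    omega

theorem Finset.exists_majority_value {P : Type*} (s : Finset P) (b : P → Bool) :
    ∃ v : Bool, #s ≤ 2 * #(s.filter (fun p => b p = v)) := by
  have h := card_filter_add_card_filter_not (s := s) (fun p => b p = true)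
  simp only [Bool.not_eq_true] at h
  by_cases hle : #(s.filter (fun p => b p = false)) ≤ #(s.filter (fun p => b p = true))
  · exact ⟨true, by omega⟩
  · exact ⟨false, by omega⟩

def edgeBoundary {P : Type*} [DecidableEq P] (Edges : List (P × P)) (S : Finset P) : ℕ :=
  Edges.countP fun e => decide ((e.1 ∈ S ∧ e.2 ∉ S) ∨ (e.1 ∉ S ∧ e.2 ∈ S))

section Rounding

variable {P β : Type*} [Fintype P] [DecidableEq β]

def disagreement (var : P → β) (b : P → Bool) (σ : β → Bool) : Finset P :=
  univ.filter fun p => b p ≠ σ (var p)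

variable (var : P → β) (b : P → Bool) (σ : β → Bool)

theorem disagreement_filter_eq (i : β) :
    (disagreement var b σ).filter (var · = i) = (univ.filter (var · = i)).filter (b · ≠ σ i) := by
  ext p
  simp only [disagreement, mem_filter, mem_univ, true_and]
  constructor
  · rintro ⟨hne, rfl⟩; exact ⟨rfl, hne⟩
  · rintro ⟨rfl, hne⟩; exact ⟨hne, rfl⟩

theorem two_mul_card_disagreement_filter_le {i : β}
    (hσ : #(univ.filter (var · = i)) ≤ 2 * #((univ.filter (var · = i)).filter (b · = σ i))) :
    2 * #((disagreement var b σ).filter (var · = i)) ≤ #(univ.filter (var · = i)) := by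
  have := card_filter_add_card_filter_not (s := univ.filter (var · = i)) (b · = σ i)
  rw [disagreement_filter_eq]
  simp only [ne_eq] at *
  omega

variable [DecidableEq P]

theorem edgeBoundary_disagreement_filter {Edges : List (P × P)}
    (hEdgeVar : ∀ e ∈ Edges, var e.1 = var e.2) (i : β) :
    edgeBoundary Edges ((disagreement var b σ).filter (var · = i)) =
      Edges.countP fun e => var e.1 = i ∧ b e.1 != b e.2 := by
  refine List.countP_congr fun e he => ?_
  simp only [disagreement, decide_eq_true_eq, mem_filter, mem_univ, true_and, ← hEdgeVar e he]
  by_cases hi : var e.1 = i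
  · subst hi
    cases b e.1 <;> cases b e.2 <;> cases σ (var e.1) <;> simp
  · simp [hi]

theorem card_disagreement_le_countP_bne (Edges : List (P × P))
    (hEdgeVar : ∀ e ∈ Edges, var e.1 = var e.2)
    (hExpander : ∀ (i : β) (S : Finset P), (∀ p ∈ S, var p = i) →
      2 * #S ≤ #(univ.filter (var · = i)) → #S ≤ edgeBoundary Edges S)
    (hσ : ∀ i, #(univ.filter (var · = i)) ≤ 2 * #((univ.filter (var · = i)).filter (b · = σ i))) :
    #(disagreement var b σ) ≤ Edges.countP fun e => b e.1 != b e.2 := by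
  set D := disagreement var b σ
  calc #D = ∑ i ∈ D.image var, #(D.filter (var · = i)) :=
        card_eq_sum_card_fiberwise fun p hp => mem_image_of_mem var hp
    _ ≤ ∑ i ∈ D.image var, edgeBoundary Edges (D.filter (var · = i)) :=
        sum_le_sum fun i _ => hExpander i _ (fun p hp => (mem_filter.1 hp).2)
          (two_mul_card_disagreement_filter_le var b σ (hσ i))
    _ = ∑ i ∈ D.image var, Edges.countP fun e => var e.1 = i ∧ b e.1 != b e.2 :=
        sum_congr rfl fun i _ => edgeBoundary_disagreement_filter var b σ hEdgeVar i
    _ ≤ Edges.countP fun e => b e.1 != b e.2 := List.sum_countP_fiber_le _ _ _ _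

end Rounding

theorem card_unsat_le_card_unsat_add_card_disagreement {ι V : Type*} [Fintype ι]
    [DecidableEq ι] [DecidableEq V] {n : ℕ} (φ : ι → Fin n → V × Bool) (b : ι × Fin n → Bool)
    (σ : V → Bool) :
    #(univ.filter fun j => ¬ ∃ a, σ (φ j a).1 = (φ j a).2) ≤
      #(univ.filter fun j => ¬ ∃ a, b (j, a) = (φ j a).2) +
        #(disagreement (fun p : ι × Fin n => (φ p.1 p.2).1) b σ) := by
  set D := disagreement (fun p : ι × Fin n => (φ p.1 p.2).1) b σ
  have hsub : (univ.filter fun j => ¬ ∃ a, σ (φ j a).1 = (φ j a).2) ⊆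
      (univ.filter fun j => ¬ ∃ a, b (j, a) = (φ j a).2) ∪ D.image Prod.fst := by
    intro j hj
    simp only [mem_filter, mem_univ, true_and, not_exists] at hj
    by_cases hb : ∃ a, b (j, a) = (φ j a).2
    · obtain ⟨a, ha⟩ := hb
      refine mem_union_right _ (mem_image.2 ⟨(j, a), ?_, rfl⟩)
      simp only [D, disagreement, mem_filter, mem_univ, true_and, ha]
      exact fun h => hj a h.symm
    · exact mem_union_left _ (by simpa using hb)
  calc _ ≤ _ := card_le_card hsub
    _ ≤ _ := card_union_le _ _
    _ ≤ _ := Nat.add_le_add_left card_image_le _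

/-- Expander-based reduction to bounded occurrences, soundness direction.
With the same construction of `ψ` from `φ` (primary clauses on occurrence variables,
two consistency clauses per 1-expander edge — an edge contributes exactly one
unsatisfied clause when its endpoints disagree): if an assignment `b` for `ψ` leaves
at most `k` clauses of `ψ` unsatisfied, then some assignment for `φ` leaves at most
`k` clauses of `φ` unsatisfied; in particular, every majority rounding `σ` of `b`
(for each variable `i`, `σ i` agrees with `b` on at least half of the occurrences
of `i`) contradicts at most `k` clauses of `φ`. -/
theorem expander_reduction_soundness (m k : ℕ)
    (φ : Fin m → Fin 3 → ℕ × Bool)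
    (Edges : List ((Fin m × Fin 3) × (Fin m × Fin 3)))
    (hEdgeVar : ∀ e ∈ Edges, (φ e.1.1 e.1.2).1 = (φ e.2.1 e.2.2).1)
    (hExpander : ∀ (i : ℕ) (S : Finset (Fin m × Fin 3)),
      (∀ p ∈ S, (φ p.1 p.2).1 = i) →
      2 * S.card ≤ (Finset.univ.filter
        (fun p : Fin m × Fin 3 => (φ p.1 p.2).1 = i)).card →
      S.card ≤ Edges.countP (fun e =>
        decide ((e.1 ∈ S ∧ e.2 ∉ S) ∨ (e.1 ∉ S ∧ e.2 ∈ S))))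
    (b : Fin m × Fin 3 → Bool)
    (hb : (Finset.univ.filter
        (fun j : Fin m => ¬ ∃ a : Fin 3, b (j, a) = (φ j a).2)).card
      + Edges.countP (fun e => b e.1 != b e.2) ≤ k) :
    (∃ σ : ℕ → Bool,
      (Finset.univ.filter
        (fun j : Fin m => ¬ ∃ a : Fin 3, σ (φ j a).1 = (φ j a).2)).card ≤ k) ∧
    (∀ σ : ℕ → Bool,
      (∀ i : ℕ,
        (Finset.univ.filter (fun p : Fin m × Fin 3 => (φ p.1 p.2).1 = i)).card ≤
          2 * ((Finset.univ.filter (fun p : Fin m × Fin 3 => (φ p.1 p.2).1 = i)).filter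
            (fun p => b p = σ i)).card) →
      (Finset.univ.filter
        (fun j : Fin m => ¬ ∃ a : Fin 3, σ (φ j a).1 = (φ j a).2)).card ≤ k) := by
  have majority_rounding_le (σ : ℕ → Bool) (hσ : ∀ i, _) :=
    (card_unsat_le_card_unsat_add_card_disagreement φ b σ).trans <|
      (Nat.add_le_add_left (card_disagreement_le_countP_bne _ b σ Edges hEdgeVar hExpander hσ)
        _).trans hb
  choose σ hσ using fun i : ℕ =>
    (univ.filter (fun p : Fin m × Fin 3 => (φ p.1 p.2).1 = i)).exists_majority_value b
  exact ⟨⟨σ, majority_rounding_le σ hσ⟩, majority_rounding_le⟩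
end

section
/- Let G = (V, E) be a connected graph with m edges, and let G' be the Metric Steiner Tree instance with vertex set {[v] : v ∈ V} ∪ {[u,v] : (u,v) ∈ E}, where d([u],[u,v]) = d([v],[u,v]) = 1 for each edge (u,v) ∈ E, d([u],[v]) = 1 for all distinct u,v ∈ V, and all other distances equal 2, with terminal set C = {[u,v] : (u,v) ∈ E}. If G has a vertex cover of size k, then G' has a Steiner tree spanning C of total cost at most m + k − 1. -/
/-- The distances of the Bern–Plassmann Metric Steiner Tree instance `G'` built from a
graph `G`: vertices are `Sum.inl u` for vertices `u` of `G` and `Sum.inr e` for edges `e`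
of `G`; distance 1 between `[u]` and `[u,v]` when `u` is an endpoint of the edge `(u,v)`,
distance 1 between any two distinct vertices `[u]`, `[v]`, and 2 otherwise. -/
def steinerWeight {V : Type*} [Fintype V] [DecidableEq V] (G : SimpleGraph V)
    [DecidableRel G.Adj] :
    (V ⊕ G.edgeFinset) → (V ⊕ G.edgeFinset) → ℕ
  | Sum.inl u, Sum.inl v => if u = v then 0 else 1
  | Sum.inl u, Sum.inr e => if u ∈ (e : Sym2 V) then 1 else 2
  | Sum.inr e, Sum.inl u => if u ∈ (e : Sym2 V) then 1 else 2
  | Sum.inr e, Sum.inr f => if e = f then 0 else 2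

/-!
Pick `s₀` in the cover `S` and, for every edge `e`, an endpoint `f e ∈ S`. Joining `[s₀]` to every
other `[s]` with `s ∈ S` (`k - 1` edges of cost 1) and every terminal `[e]` to `[f e]` (`m` edges of
cost 1) connects all terminals. Ranking `[s₀] < [s] < [e]`, every vertex has at most one neighbour
of smaller rank, which rules out cycles: on a cycle, the vertex of maximal rank would have two.
-/

namespace SimpleGraph

variable {α β : Type*} {G : SimpleGraph α}

theorem isAcyclic_of_unique_lower_adj [LinearOrder β] (r : α → β)
    (hne : ∀ ⦃x y⦄, G.Adj x y → r x ≠ r y)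
    (huniq : ∀ ⦃x y z⦄, G.Adj x y → G.Adj x z → r y < r x → r z < r x → y = z) :
    G.IsAcyclic := by
  classical
  intro v c hc
  obtain ⟨u, hu, hmax⟩ := c.support.toFinset.exists_max_image r ⟨v, by simp⟩
  rw [List.mem_toFinset] at hu
  set c' := c.rotate u hu
  have hc' : c'.IsCycle := hc.rotate hu
  have hlower (i : ℕ) (hadj : G.Adj u (c'.getVert i)) : r (c'.getVert i) < r u := by
    have hi : c'.getVert i ∈ c.support :=
      (c.mem_support_rotate_iff u hu).1 (c'.getVert_mem_support i)
    exact (hmax _ (List.mem_toFinset.2 hi)).lt_of_ne (hne hadj).symm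
  have hsnd := c'.adj_snd hc'.not_nil
  have hpen := (c'.adj_penultimate hc'.not_nil).symm
  exact hc'.snd_ne_penultimate (huniq hsnd hpen (hlower _ hsnd) (hlower _ hpen))

theorem isAcyclic_fromRel_of_rank [LinearOrder β] {R : α → α → Prop} (r : α → β)
    (hlt : ∀ ⦃x y⦄, R x y → r x < r y) (hparent : ∀ ⦃x x' y⦄, R x y → R x' y → x = x') :
    (fromRel R).IsAcyclic := by
  have hlower : ∀ ⦃x y⦄, (fromRel R).Adj x y → r y < r x → R y x := by
    rintro x y ⟨-, hxy | hyx⟩ hlt'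
    · exact absurd (hlt hxy) hlt'.not_gt
    · exact hyx
  refine isAcyclic_of_unique_lower_adj r ?_ fun x y z hy hz hyx hzx ↦
    hparent (hlower hy hyx) (hlower hz hzx)
  rintro x y ⟨-, hxy | hyx⟩
  · exact (hlt hxy).ne
  · exact (hlt hyx).ne'

theorem IsVertexCover.exists_mem_of_mem_edgeSet {c : Set α} (hc : G.IsVertexCover c)
    {e : Sym2 α} (he : e ∈ G.edgeSet) : ∃ v ∈ c, v ∈ e := by
  induction e using Sym2.ind with
  | _ u v => exact (hc he).elim (fun hu ↦ ⟨u, hu, by simp⟩) fun hv ↦ ⟨v, hv, by simp⟩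

end SimpleGraph

open SimpleGraph Finset Sum

section CoverTree

variable {V β : Type*} [DecidableEq V] [Fintype β] [DecidableEq β]

def coverTreeEdges (s₀ : V) (T : Finset V) (f : β → V) : Finset ((V ⊕ β) × (V ⊕ β)) :=
  (T.erase s₀).image (fun s ↦ (inl s₀, inl s)) ∪ univ.image (fun b ↦ (inl (f b), inr b))

variable {s₀ : V} {T : Finset V} {f : β → V}

theorem mem_coverTreeEdges {p : (V ⊕ β) × (V ⊕ β)} :
    p ∈ coverTreeEdges s₀ T f ↔
      (∃ s ∈ T.erase s₀, (inl s₀, inl s) = p) ∨ ∃ b, (inl (f b), inr b) = p := by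
  simp only [coverTreeEdges, mem_union, mem_image, mem_univ, true_and]

theorem isAcyclic_fromRel_coverTreeEdges :
    (fromRel fun x y ↦ (x, y) ∈ coverTreeEdges s₀ T f).IsAcyclic := by
  refine isAcyclic_fromRel_of_rank
    (Sum.elim (fun v ↦ if v = s₀ then 0 else 1) fun _ ↦ 2 : V ⊕ β → ℕ) ?_ ?_
  · intro x y h
    rcases mem_coverTreeEdges.1 h with ⟨s, hs, h⟩ | ⟨b, h⟩ <;> cases h
    · simp [(mem_erase.1 hs).1]
    · simp only [Sum.elim_inl, Sum.elim_inr]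
      split_ifs <;> decide
  · intro x x' y h h'
    rcases mem_coverTreeEdges.1 h with ⟨s, -, h⟩ | ⟨b, h⟩ <;> cases h <;>
      rcases mem_coverTreeEdges.1 h' with ⟨s', -, h'⟩ | ⟨b', h'⟩ <;> cases h' <;> rfl

theorem reachable_inr_inl_coverTreeEdges {b : β} (hb : f b ∈ T) :
    (fromRel fun x y ↦ (x, y) ∈ coverTreeEdges s₀ T f).Reachable (inr b) (inl s₀) := by
  have hleaf : (fromRel fun x y ↦ (x, y) ∈ coverTreeEdges s₀ T f).Adj (inr b) (inl (f b)) :=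
    (fromRel_adj _ _ _).2 ⟨by simp, .inr (mem_coverTreeEdges.2 (.inr ⟨b, rfl⟩))⟩
  refine hleaf.reachable.trans ?_
  by_cases h : f b = s₀
  · rw [h]
  · refine Adj.reachable ((fromRel_adj _ _ _).2 ⟨by simpa using h, .inr ?_⟩)
    exact mem_coverTreeEdges.2 (.inl ⟨f b, mem_erase.2 ⟨h, hb⟩, rfl⟩)

theorem sum_coverTreeEdges {M : Type*} [AddCommMonoid M] (w : V ⊕ β → V ⊕ β → M) :
    ∑ p ∈ coverTreeEdges s₀ T f, w p.1 p.2 =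
      ∑ s ∈ T.erase s₀, w (inl s₀) (inl s) + ∑ b, w (inl (f b)) (inr b) := by
  rw [coverTreeEdges, sum_union, sum_image, sum_image]
  · exact fun _ _ _ _ h ↦ inr_injective (congrArg Prod.snd h)
  · simp
  · simp [Finset.disjoint_left]

end CoverTree

theorem sum_steinerWeight_coverTreeEdges {V : Type*} [Fintype V] [DecidableEq V]
    (G : SimpleGraph V) [DecidableRel G.Adj] {s₀ : V} {T : Finset V} (hs₀ : s₀ ∈ T)
    (f : G.edgeFinset → V) (hf : ∀ e : G.edgeFinset, f e ∈ (e : Sym2 V)) :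
    ∑ p ∈ coverTreeEdges s₀ T f, steinerWeight G p.1 p.2 = (T.card - 1) + G.edgeFinset.card := by
  have hstar : ∀ s ∈ T.erase s₀, steinerWeight G (inl s₀) (inl s) = 1 := fun s hs ↦ by
    simp [steinerWeight, Ne.symm (mem_erase.1 hs).1]
  have hleaf : ∀ e, steinerWeight G (inl (f e)) (inr e) = 1 := fun e ↦ by
    simp [steinerWeight, hf e]
  rw [sum_coverTreeEdges, sum_congr rfl hstar, sum_congr rfl fun e _ ↦ hleaf e]
  simp [card_erase_of_mem hs₀]

theorem vertex_cover_to_steiner_tree_general {V : Type*} [Fintype V] [DecidableEq V]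
    (G : SimpleGraph V) [DecidableRel G.Adj]
    (m k : ℕ) (hm : G.edgeFinset.card = m)
    (S : Finset V) (hcover : ∀ u v, G.Adj u v → u ∈ S ∨ v ∈ S) (hk : S.card = k) :
    ∃ F : Finset ((V ⊕ G.edgeFinset) × (V ⊕ G.edgeFinset)),
      (SimpleGraph.fromRel (fun x y => (x, y) ∈ F)).IsAcyclic ∧
      (∀ e e' : G.edgeFinset,
        (SimpleGraph.fromRel (fun x y => (x, y) ∈ F)).Reachable (Sum.inr e) (Sum.inr e')) ∧
      (∑ p ∈ F, steinerWeight G p.1 p.2) ≤ m + k - 1 := by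
  have hS : G.IsVertexCover S := fun u v ↦ hcover u v
  rcases S.eq_empty_or_nonempty with rfl | ⟨s₀, hs₀⟩
  · refine ⟨∅, isAcyclic_bot.anti fun _ _ h ↦ by simp at h, fun e ↦ ?_, by simp⟩
    simpa using hS.exists_mem_of_mem_edgeSet (mem_edgeFinset.1 e.2)
  choose f hfS hfe using fun e : G.edgeFinset ↦
    hS.exists_mem_of_mem_edgeSet (mem_edgeFinset.1 e.2)
  refine ⟨coverTreeEdges s₀ S f, isAcyclic_fromRel_coverTreeEdges, fun e e' ↦ ?_, ?_⟩
  · exact (reachable_inr_inl_coverTreeEdges (hfS e)).trans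
      (reachable_inr_inl_coverTreeEdges (hfS e')).symm
  · rw [sum_steinerWeight_coverTreeEdges G hs₀ f hfe, hm, hk]
    have := card_pos.2 ⟨s₀, hs₀⟩
    omega

/-- Bern–Plassmann reduction, easy direction: if a connected graph `G` with `m` edges
has a vertex cover of size `k`, then the Metric Steiner Tree instance `G'` with terminal
set `C = {[u,v] : (u,v) ∈ E}` has a Steiner tree (an acyclic edge set connecting all
terminals) of total cost at most `m + k − 1`. -/
theorem vertex_cover_to_steiner_tree {V : Type*} [Fintype V] [DecidableEq V]
    (G : SimpleGraph V) [DecidableRel G.Adj] (hconn : G.Connected)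
    (m k : ℕ) (hm : G.edgeFinset.card = m)
    (S : Finset V) (hcover : ∀ u v, G.Adj u v → u ∈ S ∨ v ∈ S) (hk : S.card = k) :
    ∃ F : Finset ((V ⊕ G.edgeFinset) × (V ⊕ G.edgeFinset)),
      (SimpleGraph.fromRel (fun x y => (x, y) ∈ F)).IsAcyclic ∧
      (∀ e e' : G.edgeFinset,
        (SimpleGraph.fromRel (fun x y => (x, y) ∈ F)).Reachable (Sum.inr e) (Sum.inr e')) ∧
      (∑ p ∈ F, steinerWeight G p.1 p.2) ≤ m + k - 1 :=
  vertex_cover_to_steiner_tree_general G m k hm S hcover hk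
end

section
/- If every assignment to a 3CNF formula φ with m clauses leaves at least εm clauses unsatisfied (ε > 0), then in the bounded-occurrence formula ψ with M = (1 + 3d)m clauses obtained via the degree-d expander consistency construction, every assignment leaves at least ε·M/(1 + 3d) · (1) unsatisfied clauses; i.e., every assignment contradicts at least a fraction ε/(1 + 3d) of the clauses of ψ. Conversely, if φ is satisfiable then ψ is satisfiable. -/
/-!
Round an assignment `b` of the occurrence variables to an assignment `σ` of the variables of `φ`
by majority vote over the occurrences of each variable. The occurrences of a variable on which
`b` disagrees with `σ` form at most half of them, so by expansion they are outnumbered by the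
expander edges leaving them, and each such edge is a violated consistency constraint. Edges
never join occurrences of different variables, so these bounds add up over the variables.
A clause of `φ` violated by `σ` is either violated by `b` as well or contains a disagreeing
occurrence. Hence `ε m ≤ unsat_φ σ ≤ unsat_ψ b`, and `M = (1 + 3d) m`.
-/

open Finset

theorem List.countP_eq_sum_countP_fiberwise {α ι : Type*} [DecidableEq ι] (l : List α)
    (T : Finset ι) (key : α → ι) (hkey : ∀ e ∈ l, key e ∈ T) (r : α → Bool) :
    l.countP r = ∑ i ∈ T, l.countP (fun e => r e && key e = i) := by
  induction l with
  | nil => simp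
  | cons a l ih =>
    simp only [List.countP_cons, sum_add_distrib]
    rw [ih fun e he => hkey e (List.mem_cons_of_mem _ he)]
    congr 1
    by_cases ha : r a <;> simp [ha, hkey a List.mem_cons_self]

section Majority

variable {V : Type*} (s : Finset V) (b : V → Bool)

def majority : Bool :=
  decide (#{p ∈ s | b p = false} ≤ #{p ∈ s | b p = true})

def minority : Finset V :=
  {p ∈ s | b p ≠ majority s b}

lemma two_mul_card_minority_le : 2 * #(minority s b) ≤ #s := by
  have hsplit := card_filter_add_card_filter_not (s := s) (fun p => b p = true)
  simp only [Bool.not_eq_true] at hsplit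
  by_cases h : #{p ∈ s | b p = false} ≤ #{p ∈ s | b p = true}
  · have : minority s b = {p ∈ s | b p = false} := by simp [minority, majority, h]
    rw [this]; omega
  · have : minority s b = {p ∈ s | b p = true} := by simp [minority, majority, h]
    rw [this]; omega

end Majority

section Rounding

variable {V ι : Type*} [Fintype V] [DecidableEq ι] (var : V → ι) (b : V → Bool)

def roundByMajority (i : ι) : Bool :=
  majority {p | var p = i} b

lemma card_disagree_eq_sum_card_minority :
    #{p | b p ≠ roundByMajority var b (var p)} =
      ∑ i ∈ univ.image var, #(minority {p | var p = i} b) := by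
  rw [card_eq_sum_card_fiberwise fun p _ => mem_image_of_mem var (mem_univ p)]
  refine sum_congr rfl fun i _ => congrArg card ?_
  ext p
  simp only [minority, mem_filter, mem_univ, true_and]
  constructor
  · rintro ⟨hp, rfl⟩; exact ⟨rfl, hp⟩
  · rintro ⟨rfl, hp⟩; exact ⟨hp, rfl⟩

variable [DecidableEq V] {Edges : List (V × V)}

def cutSize (Edges : List (V × V)) (S : Finset V) : ℕ :=
  Edges.countP (fun e => decide ((e.1 ∈ S ∧ e.2 ∉ S) ∨ (e.1 ∉ S ∧ e.2 ∈ S)))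

def FibersExpand (Edges : List (V × V)) : Prop :=
  ∀ (i : ι) (S : Finset V), (∀ p ∈ S, var p = i) → 2 * #S ≤ #{p | var p = i} →
    #S ≤ cutSize Edges S

lemma cutSize_minority_le (hEdgeVar : ∀ e ∈ Edges, var e.1 = var e.2) (i : ι) :
    cutSize Edges (minority {p | var p = i} b) ≤
      Edges.countP (fun e => b e.1 != b e.2 && var e.1 = i) := by
  refine List.countP_mono_left fun e he hcut => ?_
  have hvar := hEdgeVar e he
  simp only [minority, mem_filter, mem_univ, true_and, decide_eq_true_eq] at hcut
  simp only [Bool.and_eq_true, bne_iff_ne, ne_eq, decide_eq_true_eq]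
  rcases hcut with ⟨⟨h1, hb1⟩, h2⟩ | ⟨h1, ⟨h2, hb2⟩⟩
  · exact ⟨fun h => h2 ⟨hvar ▸ h1, h ▸ hb1⟩, h1⟩
  · exact ⟨fun h => h1 ⟨hvar ▸ h2, h ▸ hb2⟩, hvar ▸ h2⟩

theorem card_disagree_roundByMajority_le (hEdgeVar : ∀ e ∈ Edges, var e.1 = var e.2)
    (hexp : FibersExpand var Edges) :
    #{p | b p ≠ roundByMajority var b (var p)} ≤ Edges.countP (fun e => b e.1 != b e.2) := by
  calc #{p | b p ≠ roundByMajority var b (var p)}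
      = ∑ i ∈ univ.image var, #(minority {p | var p = i} b) :=
        card_disagree_eq_sum_card_minority var b
    _ ≤ ∑ i ∈ univ.image var, cutSize Edges (minority {p | var p = i} b) :=
        sum_le_sum fun i _ => hexp i _ (fun p hp => (mem_filter.1 (mem_filter.1 hp).1).2)
          (two_mul_card_minority_le _ b)
    _ ≤ ∑ i ∈ univ.image var, Edges.countP (fun e => b e.1 != b e.2 && var e.1 = i) :=
        sum_le_sum fun i _ => cutSize_minority_le var b hEdgeVar i
    _ = Edges.countP (fun e => b e.1 != b e.2) :=
        (List.countP_eq_sum_countP_fiberwise _ _ _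
          (fun e _ => mem_image_of_mem var (mem_univ _)) _).symm

end Rounding

lemma card_unsat_le_add {J ι : Type*} [Fintype J] [DecidableEq J] {k : ℕ}
    (φ : J → Fin k → ι × Bool) (b : J × Fin k → Bool) (σ : ι → Bool) :
    #{j | ¬ ∃ a, σ (φ j a).1 = (φ j a).2} ≤
      #{j | ¬ ∃ a, b (j, a) = (φ j a).2} + #{p : J × Fin k | b p ≠ σ (φ p.1 p.2).1} := by
  have hcover : ({j | ¬ ∃ a, σ (φ j a).1 = (φ j a).2} : Finset J) ⊆
      ({j | ¬ ∃ a, b (j, a) = (φ j a).2} : Finset J) ∪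
        image Prod.fst {p : J × Fin k | b p ≠ σ (φ p.1 p.2).1} := by
    intro j hj
    simp only [mem_filter, mem_univ, true_and, mem_union, mem_image, Prod.exists,
      exists_and_right, exists_eq_right] at hj ⊢
    by_cases hb : ∃ a, b (j, a) = (φ j a).2
    · obtain ⟨a, ha⟩ := hb
      exact Or.inr ⟨a, fun h => hj ⟨a, h ▸ ha⟩⟩
    · exact Or.inl hb
  calc _ ≤ _ := card_le_card hcover
    _ ≤ _ := card_union_le _ _
    _ ≤ _ := Nat.add_le_add_left card_image_le _

theorem expander_reduction_gap_preservation_general (m d : ℕ) (ε : ℝ)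
    (φ : Fin m → Fin 3 → ℕ × Bool)
    (Edges : List ((Fin m × Fin 3) × (Fin m × Fin 3)))
    (hEdgeVar : ∀ e ∈ Edges, (φ e.1.1 e.1.2).1 = (φ e.2.1 e.2.2).1)
    (hExpander : ∀ (i : ℕ) (S : Finset (Fin m × Fin 3)),
      (∀ p ∈ S, (φ p.1 p.2).1 = i) →
      2 * S.card ≤ (Finset.univ.filter
        (fun p : Fin m × Fin 3 => (φ p.1 p.2).1 = i)).card →
      S.card ≤ Edges.countP (fun e =>
        decide ((e.1 ∈ S ∧ e.2 ∉ S) ∨ (e.1 ∉ S ∧ e.2 ∈ S))))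
    (hlen : 2 * Edges.length = 3 * d * m)
    (hgap : ∀ σ : ℕ → Bool,
      ε * m ≤ ((Finset.univ.filter
        (fun j : Fin m => ¬ ∃ a : Fin 3, σ (φ j a).1 = (φ j a).2)).card : ℝ)) :
    (∀ b : Fin m × Fin 3 → Bool,
      (ε / (1 + 3 * d)) * ((m + 2 * Edges.length : ℕ) : ℝ) ≤
        (((Finset.univ.filter
          (fun j : Fin m => ¬ ∃ a : Fin 3, b (j, a) = (φ j a).2)).card
          + Edges.countP (fun e => b e.1 != b e.2) : ℕ) : ℝ)) ∧
    ((∃ σ : ℕ → Bool, ∀ j : Fin m, ∃ a : Fin 3, σ (φ j a).1 = (φ j a).2) →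
      ∃ b : Fin m × Fin 3 → Bool,
        (∀ j : Fin m, ∃ a : Fin 3, b (j, a) = (φ j a).2) ∧
        ∀ e ∈ Edges, b e.1 = b e.2) := by
  refine ⟨fun b => ?_, fun ⟨σ, hσ⟩ =>
    ⟨fun p => σ (φ p.1 p.2).1, hσ, fun e he => congrArg σ (hEdgeVar e he)⟩⟩
  set var : Fin m × Fin 3 → ℕ := fun p => (φ p.1 p.2).1
  have hround : #{j | ¬ ∃ a, roundByMajority var b (φ j a).1 = (φ j a).2} ≤
      #{j | ¬ ∃ a, b (j, a) = (φ j a).2} + Edges.countP (fun e => b e.1 != b e.2) :=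
    (card_unsat_le_add φ b _).trans
      (Nat.add_le_add_left (card_disagree_roundByMajority_le var b hEdgeVar hExpander) _)
  have hM : ((m + 2 * Edges.length : ℕ) : ℝ) = (1 + 3 * d) * m := by
    rw [hlen]; push_cast; ring
  have hcancel : ε / (1 + 3 * d) * ((1 + 3 * d) * m) = ε * m := by field_simp
  rw [hM, hcancel]
  exact (hgap _).trans (by exact_mod_cast hround)

/-- Gap preservation in the degree-`d` expander bounded-occurrence reduction.
`ψ` consists of `m` primary clauses (one per clause of `φ`, on the occurrence variables)
and `2·|Edges| = 3dm` consistency clauses (two per expander edge, exactly one of which is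
unsatisfied when the endpoints disagree), for `M = m + 3dm` clauses in total.
If every assignment to `φ` leaves at least `ε·m` clauses unsatisfied, then every
assignment to `ψ` leaves at least `(ε/(1+3d))·M` clauses unsatisfied; conversely
if `φ` is satisfiable then `ψ` is satisfiable. -/
theorem expander_reduction_gap_preservation (m d : ℕ) (hm : 0 < m) (ε : ℝ) (hε : 0 < ε)
    (φ : Fin m → Fin 3 → ℕ × Bool)
    (Edges : List ((Fin m × Fin 3) × (Fin m × Fin 3)))
    (hEdgeVar : ∀ e ∈ Edges, (φ e.1.1 e.1.2).1 = (φ e.2.1 e.2.2).1)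
    (hExpander : ∀ (i : ℕ) (S : Finset (Fin m × Fin 3)),
      (∀ p ∈ S, (φ p.1 p.2).1 = i) →
      2 * S.card ≤ (Finset.univ.filter
        (fun p : Fin m × Fin 3 => (φ p.1 p.2).1 = i)).card →
      S.card ≤ Edges.countP (fun e =>
        decide ((e.1 ∈ S ∧ e.2 ∉ S) ∨ (e.1 ∉ S ∧ e.2 ∈ S))))
    (hdeg : ∀ v : Fin m × Fin 3,
      Edges.countP (fun e => decide (e.1 = v)) +
        Edges.countP (fun e => decide (e.2 = v)) ≤ d)
    (hlen : 2 * Edges.length = 3 * d * m)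
    (hgap : ∀ σ : ℕ → Bool,
      ε * m ≤ ((Finset.univ.filter
        (fun j : Fin m => ¬ ∃ a : Fin 3, σ (φ j a).1 = (φ j a).2)).card : ℝ)) :
    (∀ b : Fin m × Fin 3 → Bool,
      (ε / (1 + 3 * d)) * ((m + 2 * Edges.length : ℕ) : ℝ) ≤
        (((Finset.univ.filter
          (fun j : Fin m => ¬ ∃ a : Fin 3, b (j, a) = (φ j a).2)).card
          + Edges.countP (fun e => b e.1 != b e.2) : ℕ) : ℝ)) ∧
    ((∃ σ : ℕ → Bool, ∀ j : Fin m, ∃ a : Fin 3, σ (φ j a).1 = (φ j a).2) →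
      ∃ b : Fin m × Fin 3 → Bool,
        (∀ j : Fin m, ∃ a : Fin 3, b (j, a) = (φ j a).2) ∧
        ∀ e ∈ Edges, b e.1 = b e.2) :=
  expander_reduction_gap_preservation_general m d ε φ Edges hEdgeVar hExpander hlen hgap
end
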